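/- Let n ≥ 3 and let H be a finite simple graph that is Q-equivalent to the cycle C_n. Then H is isomorphic to C_n. -/

import Mathlib

open SimpleGraph

/-- `qij G i j` is the number of vertex subsets `X` with `|X| = i` such that the
induced subgraph `G[X]` has exactly `j` connected components. -/
noncomputable def qij {V : Type*} [Fintype V] (G : SimpleGraph V) (i j : ℕ) : ℕ :=
  Nat.card {X : Finset V // X.card = i ∧
    Nat.card (G.induce (X : Set V)).ConnectedComponent = j}

/-- Two graphs are `Q`-equivalent if they have the same subgraph component polynomial,
i.e. `q_{i,j}` agree for all `i, j`. -/
def QEquiv {V W : Type*} [Fintype V] [Fintype W]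
    (G : SimpleGraph V) (H : SimpleGraph W) : Prop :=
  ∀ i j, qij G i j = qij H i j


lemma connected_iff_card_one {V : Type*} [Finite V] [Nonempty V] (G : SimpleGraph V) :
    G.Connected ↔ Nat.card G.ConnectedComponent = 1 := by
  constructor
  · intro h
    have := h.preconnected.subsingleton_connectedComponent
    have : Nonempty G.ConnectedComponent := ⟨G.connectedComponentMk (Classical.arbitrary V)⟩
    exact Nat.card_eq_one_iff_unique.mpr ⟨‹_›, this⟩
  · intro h
    obtain ⟨hs, hne⟩ := Nat.card_eq_one_iff_unique.mp h
    refine Connected.mk ?_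
    intro v w
    have := hs.elim (G.connectedComponentMk v) (G.connectedComponentMk w)
    exact (SimpleGraph.ConnectedComponent.eq).mp this

lemma card_comp_one_of_iso {V V' : Type*} {G : SimpleGraph V} {G' : SimpleGraph V'}
    (e : G ≃g G') : Nat.card G.ConnectedComponent = Nat.card G'.ConnectedComponent :=
  Nat.card_congr e.connectedComponentEquiv

-- every vertex of a connected graph with at least 2 vertices has a neighbor
lemma exists_adj_of_connected {V : Type*} [Finite V] {G : SimpleGraph V}
    (hG : G.Connected) (h2 : 1 < Nat.card V) (v : V) : ∃ u, G.Adj v u := by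
  have : Fintype V := Fintype.ofFinite V
  rw [Nat.card_eq_fintype_card] at h2
  obtain ⟨w, hw⟩ := Fintype.exists_ne_of_one_lt_card h2 v
  obtain ⟨p⟩ := hG.preconnected v w
  cases p with
  | nil => exact absurd rfl hw.symm
  | cons h _ => exact ⟨_, h⟩

lemma card_comp_one_of_subsingleton {V : Type*} [Finite V] [Nonempty V] [Subsingleton V]
    (G : SimpleGraph V) : Nat.card G.ConnectedComponent = 1 := by
  rw [← connected_iff_card_one]
  exact Connected.mk fun v w => by rw [Subsingleton.elim v w]

lemma q11 {V : Type*} [Fintype V] (G : SimpleGraph V) : qij G 1 1 = Fintype.card V := by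
  rw [qij]
  rw [← Nat.card_eq_fintype_card]
  apply Nat.card_congr
  symm
  apply Equiv.ofBijective (f := fun v : V => (⟨{v}, by simp, ?_⟩ :
    {X : Finset V // X.card = 1 ∧ Nat.card (G.induce (X : Set V)).ConnectedComponent = 1}))
  · constructor
    · intro a b hab
      simpa [Finset.singleton_inj] using congrArg (fun x => x.1) hab
    · rintro ⟨X, hX1, hX2⟩
      obtain ⟨a, rfl⟩ := Finset.card_eq_one.mp hX1
      exact ⟨a, rfl⟩
  · have : Subsingleton ((({v} : Finset V) : Set V) : Type _) := by
      constructor; rintro ⟨a, ha⟩ ⟨b, hb⟩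
      apply Subtype.ext
      simp only [Finset.coe_singleton, Set.mem_singleton_iff] at ha hb
      show a = b
      rw [ha, hb]
    have : Nonempty ((({v} : Finset V) : Set V) : Type _) := ⟨⟨v, by simp⟩⟩
    exact card_comp_one_of_subsingleton _

lemma pair_connected_iff_adj {V : Type*} [Fintype V] [DecidableEq V] (G : SimpleGraph V) {a b : V}
    (hab : a ≠ b) :
    Nat.card (G.induce (({a, b} : Finset V) : Set V)).ConnectedComponent = 1 ↔ G.Adj a b := by
  have hne : Nonempty ((({a, b} : Finset V) : Set V) : Type _) := ⟨⟨a, by simp⟩⟩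
  rw [← connected_iff_card_one]
  constructor
  · intro h
    have hr := h.preconnected ⟨a, by simp⟩ ⟨b, by simp⟩
    obtain ⟨p⟩ := hr
    cases p with
    | nil => simp at hab
    | @cons _ c _ h q =>
      have hadj : G.Adj a c.1 := h
      have : c.1 = b := by
        have := c.2
        simp only [Finset.coe_insert, Set.mem_insert_iff, Finset.coe_singleton,
          Set.mem_singleton_iff] at this
        rcases this with h' | h'
        · exact absurd h' (G.ne_of_adj hadj).symm
        · exact h'
      rw [← this]; exact hadj
  · intro h
    refine Connected.mk ?_
    intro u v
    have key : ∀ w : (({a, b} : Finset V) : Set V), w.1 = a ∨ w.1 = b := by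
      rintro ⟨w, hw⟩; simpa using hw
    have hadj : (G.induce (({a, b} : Finset V) : Set V)).Adj ⟨a, by simp⟩ ⟨b, by simp⟩ := h
    rcases key u with hu | hu <;> rcases key v with hv | hv
    · have : u = v := Subtype.ext (hu.trans hv.symm); rw [this]
    · have hu' : u = ⟨a, by simp⟩ := Subtype.ext hu
      have hv' : v = ⟨b, by simp⟩ := Subtype.ext hv
      rw [hu', hv']; exact hadj.reachable
    · have hu' : u = ⟨b, by simp⟩ := Subtype.ext hu
      have hv' : v = ⟨a, by simp⟩ := Subtype.ext hv
      rw [hu', hv']; exact hadj.symm.reachable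
    · have : u = v := Subtype.ext (hu.trans hv.symm); rw [this]

lemma q21 {V : Type*} [Fintype V] (G : SimpleGraph V) : qij G 2 1 = Nat.card G.edgeSet := by
  classical
  rw [qij]
  apply Nat.card_congr
  symm
  have pairmap : Sym2 V → Finset V := Sym2.lift ⟨fun a b => {a, b}, fun a b => by
    simp [Finset.pair_comm]⟩
  refine Equiv.ofBijective (f := fun e : G.edgeSet =>
    (⟨Sym2.lift ⟨fun a b => {a, b}, fun a b => by simp [Finset.pair_comm]⟩ e.1, ?_⟩ :
    {X : Finset V // X.card = 2 ∧ Nat.card (G.induce (X : Set V)).ConnectedComponent = 1})) ?_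
  · obtain ⟨e, he⟩ := e
    induction e with
    | _ a b =>
      have hadj : G.Adj a b := he
      have hab : a ≠ b := G.ne_of_adj hadj
      constructor
      · simpa [Sym2.lift_mk] using Finset.card_pair hab
      · simpa [Sym2.lift_mk] using (pair_connected_iff_adj G hab).mpr hadj
  · constructor
    · rintro ⟨e, he⟩ ⟨f, hf⟩ hef
      simp only [Subtype.mk.injEq] at hef ⊢
      induction e with
      | _ a b =>
        induction f with
        | _ c d =>
          simp only [Sym2.lift_mk] at hef
          have hab : a ≠ b := G.ne_of_adj he
          have h : ({a, b} : Set V) = {c, d} := by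
            have := congrArg (fun X : Finset V => (X : Set V)) hef
            simpa using this
          rcases Set.pair_eq_pair_iff.mp h with ⟨h1, h2⟩ | ⟨h1, h2⟩
          · rw [h1, h2]
          · rw [h1, h2, Sym2.eq_swap]
    · rintro ⟨X, hX2, hXc⟩
      obtain ⟨a, b, hab, rfl⟩ := Finset.card_eq_two.mp hX2
      have hadj : G.Adj a b := (pair_connected_iff_adj G hab).mp hXc
      exact ⟨⟨s(a, b), hadj⟩, by simp [Sym2.lift_mk]⟩

lemma cycle_edgeSet_card (m : ℕ) : Nat.card (cycleGraph (m + 3)).edgeSet = m + 3 := by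
  have h := SimpleGraph.sum_degrees_eq_twice_card_edges (cycleGraph (m + 3))
  have hdeg : ∀ v : Fin (m + 3), (cycleGraph (m + 3)).degree v = 2 :=
    fun v => cycleGraph_degree_three_le
  rw [Finset.sum_congr rfl (fun v _ => hdeg v), Finset.sum_const, Finset.card_univ,
    Fintype.card_fin, smul_eq_mul] at h
  have h2 : Nat.card (cycleGraph (m + 3)).edgeSet = (cycleGraph (m + 3)).edgeFinset.card := by
    rw [Nat.card_eq_fintype_card, ← Set.toFinset_card]
    congr
  rw [h2]
  omega

lemma neg_one_val (m : ℕ) : ((-1 : Fin (m + 3))).val = m + 2 := by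
  rw [Fin.neg_def]
  simp only [Fin.val_one]
  exact Nat.mod_eq_of_lt (by omega)

lemma cycle_full_comp (n : ℕ) (hn : 3 ≤ n) (X : Finset (Fin n)) (hX : X.card = n) :
    Nat.card ((cycleGraph n).induce (X : Set (Fin n))).ConnectedComponent = 1 := by
  have hXu : X = Finset.univ := Finset.eq_univ_of_card X (by simp [hX])
  subst hXu
  rw [Finset.coe_univ]
  rw [card_comp_one_of_iso (induceUnivIso (cycleGraph n))]
  obtain ⟨m, rfl⟩ : ∃ m, n = m + 1 := ⟨n - 1, by omega⟩
  rw [← connected_iff_card_one]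
  exact cycleGraph_connected

open Fin.CommRing in
lemma cycle_del_connected (m : ℕ) (w : Fin (m + 3)) :
    ((cycleGraph (m + 3)).induce ({w}ᶜ : Set (Fin (m + 3)))).Connected := by
  have hne1 : ∀ i : Fin (m + 2), w + 1 + (i.castLE (by omega) : Fin (m + 3)) ∈
      ({w}ᶜ : Set (Fin (m + 3))) := by
    intro i
    simp only [Set.mem_compl_iff, Set.mem_singleton_iff]
    intro hc
    have h2 : (i.castLE (by omega) : Fin (m + 3)) = w - (w + 1) :=
      eq_sub_iff_add_eq.mpr ((add_comm _ _).trans hc)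
    have h3 : w - (w + 1) = -1 := by ring
    have h4 : ((i.castLE (by omega) : Fin (m + 3))).val = m + 2 := by
      rw [h2, h3]; exact neg_one_val m
    have : i.val < m + 2 := i.isLt
    simp only [Fin.castLE] at h4
    omega
  let f : Fin (m + 2) → ({w}ᶜ : Set (Fin (m + 3))) :=
    fun i => ⟨w + 1 + (i.castLE (by omega)), hne1 i⟩
  have key : ∀ a b : Fin (m + 2), a.val + 1 = b.val →
      (b.castLE (by omega) : Fin (m + 3)) = a.castLE (by omega) + 1 := by
    intro a b hab
    apply Fin.ext
    rw [Fin.add_def]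
    simp only [Fin.castLE, Fin.val_one]
    have : a.val + 1 < m + 3 := by omega
    rw [Nat.mod_eq_of_lt this]
    omega
  have hadj : ∀ u v : Fin (m + 2), (pathGraph (m + 2)).Adj u v →
      ((cycleGraph (m + 3)).induce ({w}ᶜ : Set (Fin (m + 3)))).Adj (f u) (f v) := by
    intro u v huv
    rw [pathGraph_adj] at huv
    show (cycleGraph (m + 3)).Adj (w + 1 + u.castLE (by omega)) (w + 1 + v.castLE (by omega))
    rw [cycleGraph_adj]
    rcases huv with h | h
    · right
      rw [key u v h]
      ring
    · left
      rw [key v u h]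
      ring
  have hsurj : Function.Surjective f := by
    rintro ⟨u, hu⟩
    simp only [Set.mem_compl_iff, Set.mem_singleton_iff] at hu
    set d : Fin (m + 3) := u - (w + 1) with hd
    have hdne : d ≠ -1 := by
      intro hc
      apply hu
      have h5 : u = w + 1 + d := by rw [hd]; ring
      rw [hc] at h5
      have : w + 1 + (-1 : Fin (m + 3)) = w := by ring
      rw [this] at h5
      exact h5
    have hdlt : d.val < m + 2 := by
      have h1 : d.val < m + 3 := d.isLt
      rcases Nat.lt_or_ge d.val (m + 2) with h | h
      · exact h
      · exfalso
        apply hdne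
        apply Fin.ext
        rw [neg_one_val m]
        omega
    refine ⟨⟨d.val, hdlt⟩, ?_⟩
    apply Subtype.ext
    show w + 1 + (Fin.castLE _ _) = u
    have : (Fin.castLE (by omega : m + 2 ≤ m + 3) ⟨d.val, hdlt⟩ : Fin (m + 3)) = d :=
      Fin.ext rfl
    rw [this, hd]
    ring
  have hconn : (pathGraph (m + 2)).Connected := pathGraph_connected (m + 1)
  exact hconn.map ⟨f, fun h => hadj _ _ h⟩ hsurj

lemma cycle_del_comp (n : ℕ) (hn : 3 ≤ n) (X : Finset (Fin n)) (hX : X.card = n - 1) :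
    Nat.card ((cycleGraph n).induce (X : Set (Fin n))).ConnectedComponent = 1 := by
  classical
  obtain ⟨m, rfl⟩ : ∃ m, n = m + 3 := ⟨n - 3, by omega⟩
  have hcompl : Xᶜ.card = 1 := by
    have := Finset.card_compl X
    simp only [Fintype.card_fin] at this
    omega
  obtain ⟨w, hw⟩ := Finset.card_eq_one.mp hcompl
  have hXw : X = {w}ᶜ := by
    have := congrArg (fun s => sᶜ) hw
    simpa using this
  subst hXw
  have hcoe : (({w}ᶜ : Finset (Fin (m + 3))) : Set (Fin (m + 3))) =
      ({w}ᶜ : Set (Fin (m + 3))) := by simp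
  rw [hcoe]
  haveI : Nonempty (({w}ᶜ : Set (Fin (m + 3))) : Type _) := by
    refine ⟨⟨w + 1, ?_⟩⟩
    simp only [Set.mem_compl_iff, Set.mem_singleton_iff]
    intro hc
    have h1 : (1 : Fin (m + 3)) = 0 := by
      have := congrArg (fun x => x - w) hc
      simpa [add_comm, add_sub_cancel_left, sub_self] using this
    have := congrArg Fin.val h1
    simp [Fin.val_one] at this
  rw [← connected_iff_card_one]
  exact cycle_del_connected m w

lemma qij_ne_zero_iff {V : Type*} [Fintype V] (G : SimpleGraph V) (i j : ℕ) :
    qij G i j ≠ 0 ↔ ∃ X : Finset V, X.card = i ∧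
      Nat.card (G.induce (X : Set V)).ConnectedComponent = j := by
  rw [qij, Nat.card_ne_zero]
  constructor
  · rintro ⟨⟨⟨X, hX⟩⟩, _⟩
    exact ⟨X, hX⟩
  · rintro ⟨X, hX⟩
    exact ⟨⟨⟨X, hX⟩⟩, inferInstance⟩

section TwoReg
variable {W : Type*} [Fintype W] (H : SimpleGraph W)

open Fin.CommRing in
lemma two_regular_iso (n : ℕ) (hn : 3 ≤ n)
    (hcard : Fintype.card W = n) (hconn : H.Connected)
    (hdeg : ∀ v : W, (H.neighborSet v).ncard = 2) :
    Nonempty (H ≃g cycleGraph n) := by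
  classical
  have hpair : ∀ v : W, ∃ x y : W, x ≠ y ∧ H.neighborSet v = {x, y} := fun v =>
    Set.ncard_eq_two.mp (hdeg v)
  have hnext : ∀ a b : W, H.Adj a b → ∃ c, H.Adj b c ∧ c ≠ a := by
    intro a b hab
    obtain ⟨x, y, hxy, hset⟩ := hpair b
    by_cases hx : x = a
    · refine ⟨y, ?_, fun h => hxy (by rw [hx, h])⟩
      have : y ∈ H.neighborSet b := by rw [hset]; simp
      exact this
    · refine ⟨x, ?_, hx⟩
      have : x ∈ H.neighborSet b := by rw [hset]; simp
      exact this
  have huniq : ∀ a b c c' : W, H.Adj b a → H.Adj b c → c ≠ a → H.Adj b c' → c' ≠ a → c = c' := by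
    intro a b c c' ha hc hca hc' hc'a
    obtain ⟨x, y, hxy, hset⟩ := hpair b
    have hma : a ∈ ({x, y} : Set W) := hset ▸ ha
    have hmc : c ∈ ({x, y} : Set W) := hset ▸ hc
    have hmc' : c' ∈ ({x, y} : Set W) := hset ▸ hc'
    simp only [Set.mem_insert_iff, Set.mem_singleton_iff] at hma hmc hmc'
    rcases hma with rfl | rfl <;> rcases hmc with rfl | rfl <;> rcases hmc' with rfl | rfl <;>
      simp_all
  set nxt : W → W → W := fun a b => if h : ∃ c, H.Adj b c ∧ c ≠ a then h.choose else b with hnxt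
  have hnxt_adj : ∀ {a b : W}, H.Adj a b → H.Adj b (nxt a b) ∧ nxt a b ≠ a := by
    intro a b h
    have he := hnext a b h
    rw [hnxt]
    simp only [dif_pos he]
    exact he.choose_spec
  -- the successor dynamics on directed edges
  let A := {q : W × W // H.Adj q.1 q.2}
  let F : A → A := fun q => ⟨(q.1.2, nxt q.1.1 q.1.2), (hnxt_adj q.2).1⟩
  have Finj : Function.Injective F := by
    intro x y h
    have hb : x.1.2 = y.1.2 := congrArg (fun z : A => z.1.1) h
    have hnn : nxt x.1.1 x.1.2 = nxt y.1.1 y.1.2 := congrArg (fun z : A => z.1.2) h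
    have hab : H.Adj x.1.1 x.1.2 := x.2
    have hab' : H.Adj y.1.1 y.1.2 := y.2
    rw [← hb] at hab' hnn
    have hs : x.1.1 = y.1.1 := by
      obtain ⟨hc1, hc2⟩ := hnxt_adj hab
      obtain ⟨hd1, hd2⟩ := hnxt_adj hab'
      rw [hnn] at hc1 hc2
      exact huniq (nxt y.1.1 x.1.2) x.1.2 x.1.1 y.1.1 hc1 hab.symm (fun h' => hc2 h'.symm)
        hab'.symm (fun h' => hd2 h'.symm)
    apply Subtype.ext
    exact Prod.ext hs hb
  -- starting edge
  have hWpos : Nonempty W := by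
    rw [← Fintype.card_pos_iff]; omega
  obtain ⟨v0⟩ := hWpos
  have h0 : ∃ b0, H.Adj v0 b0 := by
    obtain ⟨x, y, hxy, hset⟩ := hpair v0
    exact ⟨x, by rw [← SimpleGraph.mem_neighborSet, hset]; simp⟩
  obtain ⟨b0, hb0⟩ := h0
  set p : ℕ → A := fun k => F^[k] ⟨(v0, b0), hb0⟩ with hp
  set a : ℕ → W := fun k => (p k).1.1 with ha
  have hps : ∀ k, p (k + 1) = F (p k) := fun k => Function.iterate_succ_apply' F k _
  have ha2 : ∀ k, (p k).1.2 = a (k + 1) := by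
    intro k
    rw [ha]
    simp only
    rw [hps k]
  have hadj : ∀ k, H.Adj (a k) (a (k + 1)) := fun k => (ha2 k) ▸ (p k).2
  have hnext_eq : ∀ k, a (k + 2) = nxt (a k) (a (k + 1)) := by
    intro k
    have : a (k + 2) = (p (k + 1)).1.2 := (ha2 (k + 1)).symm
    rw [this, hps k]
    show nxt (p k).1.1 (p k).1.2 = _
    rw [ha2 k]
  have hne2 : ∀ k, a (k + 2) ≠ a k := by
    intro k
    rw [hnext_eq k]
    exact (hnxt_adj (hadj k)).2
  have hnbrs : ∀ k, H.neighborSet (a (k + 1)) = {a k, a (k + 2)} := by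
    intro k
    symm
    apply Set.eq_of_subset_of_ncard_le
    · intro z hz
      simp only [Set.mem_insert_iff, Set.mem_singleton_iff] at hz
      rcases hz with rfl | rfl
      · exact (hadj k).symm
      · exact hadj (k + 1)
    · rw [hdeg, Set.ncard_pair (hne2 k).symm]
    · exact Set.toFinite _
  -- periodicity
  have hTex : ∃ t, 0 < t ∧ p t = p 0 := by
    obtain ⟨i, j, hij, he⟩ := Finite.exists_ne_map_eq_of_infinite p
    rcases Nat.lt_or_ge i j with h | h
    · refine ⟨j - i, by omega, ?_⟩
      have : F^[i] (p (j - i)) = F^[i] (p 0) := by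
        rw [hp]
        simp only
        rw [← Function.iterate_add_apply, ← Function.iterate_add_apply]
        have : i + (j - i) = j := by omega
        rw [this]
        rw [Nat.add_zero]
        exact he.symm
      exact (Finj.iterate i) this
    · have hij' : j < i := by omega
      refine ⟨i - j, by omega, ?_⟩
      have : F^[j] (p (i - j)) = F^[j] (p 0) := by
        rw [hp]
        simp only
        rw [← Function.iterate_add_apply, ← Function.iterate_add_apply]
        have : j + (i - j) = i := by omega
        rw [this]
        rw [Nat.add_zero]
        exact he
      exact (Finj.iterate j) this
  set T : ℕ := Nat.find hTex with hT
  obtain ⟨hT0, hTp⟩ : 0 < T ∧ p T = p 0 := Nat.find_spec hTex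
  have hTmin : ∀ t, 0 < t → t < T → p t ≠ p 0 := by
    intro t ht0 htT hc
    exact Nat.find_min hTex htT ⟨ht0, hc⟩
  have hper : ∀ k, p (k + T) = p k := by
    intro k
    rw [hp]
    simp only
    rw [Function.iterate_add_apply]
    show F^[k] (p T) = _
    rw [hTp]
    rfl
  have haper : ∀ k, a (k + T) = a k := fun k => congrArg (fun q : A => q.1.1) (hper k)
  -- reversal machinery
  set Rev : ℕ → ℕ → Prop := fun s t => a s = a (t + 1) ∧ a (s + 1) = a t with hRev
  have hstep : ∀ s t, Rev s (t + 1) → Rev (s + 1) t := by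
    intro s t ⟨h1, h2⟩
    refine ⟨h2, ?_⟩
    have e1 : a (s + 2) = nxt (a s) (a (s + 1)) := hnext_eq s
    rw [h1, h2] at e1
    -- e1 : a (s+2) = nxt (a (t+2)) (a (t+1))
    obtain ⟨hc1, hc2⟩ := hnxt_adj ((hadj (t + 1)).symm)
    rw [← e1] at hc1 hc2
    -- hc1 : Adj (a (t+1)) (a (s+2)), hc2 : a (s+2) ≠ a (t+2)
    exact huniq (a (t + 2)) (a (t + 1)) (a (s + 2)) (a t) (hadj (t + 1)) hc1 hc2
      (hadj t).symm (hne2 t).symm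
  have hshift : ∀ k s t, Rev s (t + k) → Rev (s + k) t := by
    intro k
    induction k with
    | zero => intro s t h; exact h
    | succ k ih =>
      intro s t h
      have h' : Rev s ((t + 1) + k) := by
        have : (t + 1) + k = t + (k + 1) := by omega
        rw [this]
        exact h
      have := hstep (s + k) t (ih s (t + 1) h')
      have he : s + (k + 1) = (s + k) + 1 := by omega
      rw [he]
      exact this
  have hRevT : ∀ s t, Rev s t → Rev s (t + T) := by
    intro s t ⟨h1, h2⟩
    constructor
    · rw [show t + T + 1 = (t + 1) + T by omega, haper]; exact h1
    · rw [haper]; exact h2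
  have hRevTc : ∀ c s t, Rev s t → Rev s (t + c * T) := by
    intro c
    induction c with
    | zero => intro s t h; simpa using h
    | succ c ih =>
      intro s t h
      have := hRevT s (t + c * T) (ih s t h)
      have he : t + (c + 1) * T = t + c * T + T := by ring
      rw [he]
      exact this
  have no_rev : ∀ s t, ¬ Rev s t := by
    intro s t h
    have h' : Rev s (t + (s + 1) * T) := hRevTc (s + 1) s t h
    set t' := t + (s + 1) * T with ht'
    have hst' : s + 1 ≤ t' := by
      have : s + 1 ≤ (s + 1) * T := Nat.le_mul_of_pos_right _ hT0
      omega
    rcases Nat.even_or_odd (t' - s) with ⟨k, hk⟩ | ⟨k, hk⟩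
    · -- t' = s + 2k, meet at point: Rev (s+k) (s+k)
      have hm : Rev (s + k) (s + k) := by
        have : Rev s ((s + k) + k) := by
          rw [show (s + k) + k = t' by omega]
          exact h'
        exact hshift k s (s + k) this
      exact (hadj (s + k)).ne hm.1
    · -- t' = s + 2k + 1, meet at edge: Rev (s+k) (s+k+1)
      have hm : Rev (s + k) (s + k + 1) := by
        have : Rev s ((s + k + 1) + k) := by
          rw [show (s + k + 1) + k = t' by omega]
          exact h'
        exact hshift k s (s + k + 1) this
      exact hne2 (s + k) hm.1.symm
  -- injectivity on a period
  have hinjT : ∀ i j, i < j → j < T → a i ≠ a j := by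
    intro i j hij hjT hc
    by_cases hc2 : a (i + 1) = a (j + 1)
    · -- p i = p j, contradiction with minimality
      have hpij : p i = p j := by
        apply Subtype.ext
        apply Prod.ext
        · exact hc
        · rw [ha2 i, ha2 j]; exact hc2
      have : F^[i] (p (j - i)) = F^[i] (p 0) := by
        rw [hp]
        simp only
        rw [← Function.iterate_add_apply, ← Function.iterate_add_apply]
        rw [show i + (j - i) = j by omega, Nat.add_zero]
        exact hpij.symm
      exact hTmin (j - i) (by omega) (by omega) ((Finj.iterate i) this)
    · -- reversal
      obtain ⟨j', rfl⟩ : ∃ j', j = j' + 1 := ⟨j - 1, by omega⟩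
      have hmem : a (i + 1) ∈ H.neighborSet (a (j' + 1)) := by
        rw [SimpleGraph.mem_neighborSet, ← hc]
        exact hadj i
      rw [hnbrs j'] at hmem
      simp only [Set.mem_insert_iff, Set.mem_singleton_iff] at hmem
      rcases hmem with hm | hm
      · exact no_rev i j' ⟨hc, hm⟩
      · exact hc2 hm
  -- range of a is everything
  have hmod : ∀ k, a (k % T) = a k := by
    intro k
    induction k using Nat.strong_induction_on with
    | _ k ih =>
      rcases Nat.lt_or_ge k T with h | h
      · rw [Nat.mod_eq_of_lt h]
      · have h1 : k = (k - T) + T := by omega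
        rw [h1, haper, Nat.add_mod_right]
        exact ih (k - T) (by omega)
  have hclosed : ∀ k w, H.Adj (a k) w → ∃ k', a k' = w := by
    intro k w hw
    set k1 := k + T - 1 with hk1
    have he : k1 + 1 = k + T := by omega
    have hmem : w ∈ H.neighborSet (a (k1 + 1)) := by
      rw [SimpleGraph.mem_neighborSet, he, haper]
      exact hw
    rw [hnbrs k1] at hmem
    simp only [Set.mem_insert_iff, Set.mem_singleton_iff] at hmem
    rcases hmem with hm | hm
    · exact ⟨k1, hm.symm⟩
    · exact ⟨k1 + 2, hm.symm⟩
  have hrange : ∀ w, ∃ k, a k = w := by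
    have hwalk : ∀ u w : W, H.Walk u w → (∃ k, a k = u) → (∃ k, a k = w) := by
      intro u w q
      induction q with
      | nil => exact id
      | cons h q' ih =>
        intro hu
        apply ih
        obtain ⟨k, hk⟩ := hu
        exact hclosed k _ (hk ▸ h)
    intro w
    obtain ⟨q⟩ := hconn.preconnected (a 0) w
    exact hwalk _ _ q ⟨0, rfl⟩
  -- T = n
  have hinj' : Function.Injective (fun i : Fin T => a i.val) := by
    intro i j hij
    by_contra hne
    rcases Nat.lt_or_ge i.val j.val with h | h
    · exact hinjT i.val j.val h j.isLt hij
    · have h' : j.val < i.val := by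
        rcases Nat.lt_or_ge j.val i.val with h2 | h2
        · exact h2
        · exact absurd (Fin.ext (by omega)) hne
      exact hinjT j.val i.val h' i.isLt hij.symm
  have hsurj' : Function.Surjective (fun i : Fin T => a i.val) := by
    intro w
    obtain ⟨k, hk⟩ := hrange w
    exact ⟨⟨k % T, Nat.mod_lt _ hT0⟩, by rw [← hk]; exact hmod k⟩
  have hTn : T = n := by
    have h1 : T ≤ n := by
      have := Fintype.card_le_of_injective _ hinj'
      rwa [Fintype.card_fin, hcard] at this
    have h2 : n ≤ T := by
      have := Fintype.card_le_of_surjective _ hsurj'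
      rwa [Fintype.card_fin, hcard] at this
    omega
  clear_value T
  subst hTn
  obtain ⟨m, rfl⟩ : ∃ m, T = m + 3 := ⟨T - 3, by omega⟩
  have hinj_n : ∀ i j : ℕ, i < m + 3 → j < m + 3 → a i = a j → i = j := by
    intro i j hi hj hij
    by_contra hne
    rcases Nat.lt_or_ge i j with h | h
    · exact hinjT i j h hj hij
    · exact hinjT j i (by omega) hi hij.symm
  have hval1 : ((1 : Fin (m + 3))).val = 1 := rfl
  have hvadd : ∀ i j : Fin (m + 3), (i + j).val = (i.val + j.val) % (m + 3) := by
    intro i j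
    rw [Fin.add_def]
  -- forward: cycle adjacency implies H adjacency
  have hfor1 : ∀ i j : Fin (m + 3), j - i = 1 → H.Adj (a i.val) (a j.val) := by
    intro i j hsub
    have hj : j = 1 + i := by
      have h2 : j - i + i = j := sub_add_cancel j i
      rw [hsub] at h2
      exact h2.symm
    have hjv : j.val = (i.val + 1) % (m + 3) := by
      rw [hj, hvadd, hval1, Nat.add_comm]
    rw [hjv, hmod]
    exact hadj i.val
  have hfor : ∀ i j : Fin (m + 3), (cycleGraph (m + 3)).Adj i j → H.Adj (a i.val) (a j.val) := by
    intro i j hij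
    rw [cycleGraph_adj] at hij
    rcases hij with h | h
    · exact (hfor1 j i h).symm
    · exact hfor1 i j h
  -- reverse: H adjacency implies cycle adjacency
  have hrev : ∀ i j : Fin (m + 3), H.Adj (a i.val) (a j.val) → (cycleGraph (m + 3)).Adj i j := by
    intro i j hij
    set k1 : ℕ := i.val + (m + 2) with hk1
    have he : k1 + 1 = i.val + (m + 3) := by omega
    have hmem : a j.val ∈ H.neighborSet (a (k1 + 1)) := by
      rw [SimpleGraph.mem_neighborSet, he, haper]
      exact hij
    rw [hnbrs k1] at hmem
    simp only [Set.mem_insert_iff, Set.mem_singleton_iff] at hmem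
    rw [cycleGraph_adj]
    rcases hmem with hm | hm
    · -- a j.val = a k1, so j = i - 1
      have hjv : j.val = k1 % (m + 3) := by
        apply hinj_n _ _ j.isLt (Nat.mod_lt _ (by omega))
        rw [hmod, ← hm]
      have hj : j = i + (-1) := by
        apply Fin.ext
        rw [hvadd, neg_one_val m, hjv, hk1]
      left
      rw [hj]
      ring
    · -- a j.val = a (k1 + 2), so j = i + 1
      have hk2 : k1 + 2 = (i.val + 1) + (m + 3) := by omega
      have hm' : a j.val = a ((i.val + 1) % (m + 3)) := by
        rw [hmod, ← haper (i.val + 1), ← hk2]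
        exact hm
      have hjv : j.val = (i.val + 1) % (m + 3) :=
        hinj_n _ _ j.isLt (Nat.mod_lt _ (by omega)) hm'
      have hj : j = i + 1 := by
        apply Fin.ext
        rw [hvadd, hval1, hjv]
      right
      rw [hj]
      ring
  let e : Fin (m + 3) ≃ W := Equiv.ofBijective (fun i : Fin (m + 3) => a i.val) ⟨hinj', hsurj'⟩
  refine ⟨(RelIso.mk e ?_).symm⟩
  intro i j
  exact ⟨hrev i j, hfor i j⟩

end TwoReg

theorem cycle_Q_unique (n : ℕ) (hn : 3 ≤ n)
    {W : Type*} [Fintype W] (H : SimpleGraph W)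
    (hQ : QEquiv H (cycleGraph n)) :
    Nonempty (H ≃g cycleGraph n) := by
  classical
  have hcard : Fintype.card W = n := by
    have h1 := hQ 1 1
    rw [q11, q11, Fintype.card_fin] at h1
    exact h1
  have hWne : Nonempty W := by rw [← Fintype.card_pos_iff]; omega
  have hconn : H.Connected := by
    have h1 : qij H n (Nat.card (H.induce ((Finset.univ : Finset W) : Set W)).ConnectedComponent)
        ≠ 0 := by
      rw [qij_ne_zero_iff]
      exact ⟨Finset.univ, by rw [Finset.card_univ, hcard], rfl⟩
    rw [hQ] at h1
    obtain ⟨Y, hY1, hY2⟩ := (qij_ne_zero_iff (cycleGraph n) _ _).mp h1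
    have hk1 : Nat.card (H.induce ((Finset.univ : Finset W) : Set W)).ConnectedComponent = 1 := by
      rw [← hY2]
      exact cycle_full_comp n hn Y hY1
    rw [Finset.coe_univ] at hk1
    haveI : Nonempty (Set.univ : Set W) := ⟨⟨Classical.arbitrary W, trivial⟩⟩
    have hcu : (H.induce (Set.univ : Set W)).Connected := (connected_iff_card_one _).mpr hk1
    exact hcu.map (induceUnivIso H).toHom (induceUnivIso H).toEquiv.surjective
  have hdel : ∀ v : W, (H.induce ({v}ᶜ : Set W)).Connected := by
    intro v
    have hXcard : ({v}ᶜ : Finset W).card = n - 1 := by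
      rw [Finset.card_compl, Finset.card_singleton, hcard]
    have h1 : qij H (n - 1)
        (Nat.card (H.induce ((({v}ᶜ : Finset W)) : Set W)).ConnectedComponent) ≠ 0 := by
      rw [qij_ne_zero_iff]
      exact ⟨{v}ᶜ, hXcard, rfl⟩
    rw [hQ] at h1
    obtain ⟨Y, hY1, hY2⟩ := (qij_ne_zero_iff (cycleGraph n) _ _).mp h1
    have hk1 : Nat.card (H.induce ((({v}ᶜ : Finset W)) : Set W)).ConnectedComponent = 1 := by
      rw [← hY2]
      exact cycle_del_comp n hn Y hY1
    have hcoe : ((({v}ᶜ : Finset W)) : Set W) = ({v}ᶜ : Set W) := by simp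
    rw [hcoe] at hk1
    obtain ⟨u, hu⟩ := Fintype.exists_ne_of_one_lt_card (by omega : 1 < Fintype.card W) v
    haveI : Nonempty ({v}ᶜ : Set W) := ⟨⟨u, by simp [hu]⟩⟩
    exact (connected_iff_card_one _).mpr hk1
  obtain ⟨m, rfl⟩ : ∃ m, n = m + 3 := ⟨n - 3, by omega⟩
  have hedge : Nat.card H.edgeSet = m + 3 := by
    have h1 := hQ 2 1
    rw [q21, q21, cycle_edgeSet_card m] at h1
    exact h1
  letI : DecidableRel H.Adj := Classical.decRel _
  have hdeg2 : ∀ v : W, 2 ≤ H.degree v := by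
    intro v
    obtain ⟨u1, hu1⟩ := exists_adj_of_connected hconn
      (by rw [Nat.card_eq_fintype_card, hcard]; omega) v
    have hvne : v ≠ u1 := H.ne_of_adj hu1
    have hcc : Nat.card ({u1}ᶜ : Set W) = m + 2 := by
      rw [Nat.card_coe_set_eq]
      have h2 := Set.ncard_add_ncard_compl ({u1} : Set W)
      rw [Set.ncard_singleton, Nat.card_eq_fintype_card, hcard] at h2
      omega
    obtain ⟨u2, hu2⟩ := exists_adj_of_connected (hdel u1) (by omega : 1 < Nat.card _)
      (⟨v, by simp [hvne]⟩ : ({u1}ᶜ : Set W))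
    have hadj2 : H.Adj v u2.1 := hu2
    have hu2ne : u2.1 ≠ u1 := fun h => u2.2 (by rw [h]; exact Set.mem_singleton u1)
    have h1 : 1 < (H.neighborFinset v).card := Finset.one_lt_card.mpr
      ⟨u1, by simp [hu1], u2.1, by simp [hadj2], hu2ne.symm⟩
    exact h1
  have hsum : ∑ v : W, H.degree v = 2 * (m + 3) := by
    have h1 := SimpleGraph.sum_degrees_eq_twice_card_edges H
    have h2 : Nat.card H.edgeSet = H.edgeFinset.card := by
      rw [Nat.card_eq_fintype_card, ← Set.toFinset_card]
      congr
    omega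
  have hdeg_all : ∀ v : W, H.degree v = 2 := by
    intro v
    by_contra hne
    have h3 : 3 ≤ H.degree v := by
      have := hdeg2 v
      omega
    have hrest := Finset.card_nsmul_le_sum (Finset.univ.erase v)
      (fun u => H.degree u) 2 (fun u _ => hdeg2 u)
    have hsplit : H.degree v + ∑ u ∈ Finset.univ.erase v, H.degree u = ∑ u : W, H.degree u :=
      Finset.add_sum_erase Finset.univ (fun u => H.degree u) (Finset.mem_univ v)
    have hcarde : (Finset.univ.erase v).card = m + 2 := by
      rw [Finset.card_erase_of_mem (Finset.mem_univ v), Finset.card_univ, hcard]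
      omega
    rw [smul_eq_mul, hcarde] at hrest
    omega
  have hncard : ∀ v : W, (H.neighborSet v).ncard = 2 := by
    intro v
    rw [Set.ncard_eq_toFinset_card']
    exact hdeg_all v
  exact two_regular_iso H (m + 3) hn hcard hconn hncard
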